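/- arXiv:math/0404493 — 3 statements merged into one kernel-verified Lean document; each statement's English description precedes it below -/
import Mathlib

section
/- The anti-linear map ω defined on generators by ω(x_±) = x_±, ω(v) = v̄, ω(v̄) = v extends to a well-defined anti-linear anti-involution of the q-Minkowski algebra, provided |q| = 1 (so that ω(q) = q̄ = q^{-1}). -/
open FreeAlgebra

/-- Relations of q-Minkowski space-time on the free algebra with generators
`0 = x₊`, `1 = x₋`, `2 = v`, `3 = v̄`. -/
inductive qMinkRel (q : ℂ) : FreeAlgebra ℂ (Fin 4) → FreeAlgebra ℂ (Fin 4) → Prop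
  | pv : qMinkRel q (ι ℂ (0 : Fin 4) * ι ℂ (2 : Fin 4)) (q • (ι ℂ (2 : Fin 4) * ι ℂ (0 : Fin 4)))
  | mv : qMinkRel q (ι ℂ (1 : Fin 4) * ι ℂ (2 : Fin 4)) (q⁻¹ • (ι ℂ (2 : Fin 4) * ι ℂ (1 : Fin 4)))
  | pvb : qMinkRel q (ι ℂ (0 : Fin 4) * ι ℂ (3 : Fin 4)) (q • (ι ℂ (3 : Fin 4) * ι ℂ (0 : Fin 4)))
  | mvb : qMinkRel q (ι ℂ (1 : Fin 4) * ι ℂ (3 : Fin 4)) (q⁻¹ • (ι ℂ (3 : Fin 4) * ι ℂ (1 : Fin 4)))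
  | comm : qMinkRel q (ι ℂ (0 : Fin 4) * ι ℂ (1 : Fin 4) - ι ℂ (1 : Fin 4) * ι ℂ (0 : Fin 4))
      ((q - q⁻¹) • (ι ℂ (2 : Fin 4) * ι ℂ (3 : Fin 4)))
  | vvb : qMinkRel q (ι ℂ (3 : Fin 4) * ι ℂ (2 : Fin 4)) (ι ℂ (2 : Fin 4) * ι ℂ (3 : Fin 4))

/-- The q-Minkowski space-time algebra. -/
def qMinkAlg (q : ℂ) : Type := RingQuot (qMinkRel q)

noncomputable instance (q : ℂ) : Ring (qMinkAlg q) := by unfold qMinkAlg; infer_instance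
noncomputable instance (q : ℂ) : Algebra ℂ (qMinkAlg q) := by unfold qMinkAlg; infer_instance

/-- The images of the generators in the q-Minkowski algebra. -/
noncomputable def qMinkGen (q : ℂ) (i : Fin 4) : qMinkAlg q :=
  RingQuot.mkAlgHom ℂ (qMinkRel q) (ι ℂ i)


noncomputable instance (q : ℂ) : Algebra ℂ (qMinkAlg q)ᵐᵒᵖ := by infer_instance

/-- Opposite-algebra images of the generators, with `2` and `3` swapped. -/
noncomputable def qGenOp (q : ℂ) (i : Fin 4) : (qMinkAlg q)ᵐᵒᵖ :=
  MulOpposite.op (qMinkGen q (Equiv.swap (2 : Fin 4) 3 i))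

/-- The conjugate-linear anti-multiplicative lift of the generator assignment. -/
noncomputable def qPhi (q : ℂ) : FreeAlgebra ℂ (Fin 4) →+* (qMinkAlg q)ᵐᵒᵖ :=
  (MonoidAlgebra.liftNCRingHom ((algebraMap ℂ (qMinkAlg q)ᵐᵒᵖ).comp (starRingEnd ℂ))
      (FreeMonoid.lift (qGenOp q)) (fun c m => by
        simpa [Commute, SemiconjBy] using Algebra.commutes (R := ℂ) ((starRingEnd ℂ) c)
          ((FreeMonoid.lift (qGenOp q)) m))).comp
    (FreeAlgebra.equivMonoidAlgebraFreeMonoid (R := ℂ) (X := Fin 4)).toAlgHom.toRingHom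

lemma qPhi_ι (q : ℂ) (i : Fin 4) : qPhi q (ι ℂ i) = qGenOp q i := by
  have h : FreeAlgebra.equivMonoidAlgebraFreeMonoid (R := ℂ) (X := Fin 4) (ι ℂ i)
      = MonoidAlgebra.single (FreeMonoid.of i) 1 := by
    simp [FreeAlgebra.equivMonoidAlgebraFreeMonoid, MonoidAlgebra.of_apply]
  simp only [qPhi, RingHom.comp_apply, AlgHom.toRingHom_eq_coe, RingHom.coe_coe,
    AlgEquiv.toAlgHom_eq_coe, AlgHom.coe_coe, h]
  rw [MonoidAlgebra.liftNCRingHom]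
  erw [h]
  simp [MonoidAlgebra.liftNC_single]

lemma qPhi_algebraMap (q : ℂ) (c : ℂ) :
    qPhi q (algebraMap ℂ _ c) = algebraMap ℂ _ ((starRingEnd ℂ) c) := by
  simp only [qPhi, RingHom.comp_apply, AlgHom.toRingHom_eq_coe, RingHom.coe_coe,
    AlgEquiv.toAlgHom_eq_coe, AlgHom.coe_coe, AlgEquiv.commutes]
  have h : (algebraMap ℂ (MonoidAlgebra ℂ (FreeMonoid (Fin 4)))) c
      = MonoidAlgebra.single 1 c := rfl
  erw [AlgEquiv.commutes, h]
  rw [MonoidAlgebra.liftNCRingHom]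
  simp [MonoidAlgebra.liftNC_single]

lemma qPhi_smul (q : ℂ) (c : ℂ) (x : FreeAlgebra ℂ (Fin 4)) :
    qPhi q (c • x) = (starRingEnd ℂ c) • qPhi q x := by
  rw [Algebra.smul_def, map_mul, qPhi_algebraMap, ← Algebra.smul_def]

lemma conj_eq_inv_of_abs (q : ℂ) (hq : q ≠ 0) (habs : ‖q‖ = 1) :
    (starRingEnd ℂ) q = q⁻¹ := by
  have h : q * (starRingEnd ℂ) q = 1 := by
    rw [Complex.mul_conj, Complex.normSq_eq_norm_sq, habs]; norm_num
  exact eq_inv_of_mul_eq_one_right h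

lemma qPhi_rel (q : ℂ) (hq : q ≠ 0) (habs : ‖q‖ = 1)
    ⦃a b : FreeAlgebra ℂ (Fin 4)⦄ (h : qMinkRel q a b) :
    qPhi q a = qPhi q b := by
  have hc := conj_eq_inv_of_abs q hq habs
  have hswap02 : Equiv.swap (2 : Fin 4) 3 0 = 0 := by decide
  have hswap12 : Equiv.swap (2 : Fin 4) 3 1 = 1 := by decide
  have hswap22 : Equiv.swap (2 : Fin 4) 3 2 = 3 := by decide
  have hswap32 : Equiv.swap (2 : Fin 4) 3 3 = 2 := by decide
  induction h with
  | pv =>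
      have hrel := RingQuot.mkAlgHom_rel ℂ (qMinkRel.pvb (q := q))
      simp only [map_smul, map_mul] at hrel
      change qMinkGen q 0 * qMinkGen q 3 = q • (qMinkGen q 3 * qMinkGen q 0) at hrel
      simp only [map_mul, qPhi_smul, qPhi_ι, qGenOp, hswap02, hswap22, hc,
        ← MulOpposite.op_mul, ← MulOpposite.op_smul, MulOpposite.op_inj]
      rw [hrel, smul_smul, inv_mul_cancel₀ hq, one_smul]
  | mv =>
      have hrel := RingQuot.mkAlgHom_rel ℂ (qMinkRel.mvb (q := q))
      simp only [map_smul, map_mul] at hrel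
      change qMinkGen q 1 * qMinkGen q 3 = q⁻¹ • (qMinkGen q 3 * qMinkGen q 1) at hrel
      simp only [map_mul, qPhi_smul, qPhi_ι, qGenOp, hswap12, hswap22, map_inv₀, hc,
        inv_inv, ← MulOpposite.op_mul, ← MulOpposite.op_smul, MulOpposite.op_inj]
      rw [hrel, smul_smul, mul_inv_cancel₀ hq, one_smul]
  | pvb =>
      have hrel := RingQuot.mkAlgHom_rel ℂ (qMinkRel.pv (q := q))
      simp only [map_smul, map_mul] at hrel
      change qMinkGen q 0 * qMinkGen q 2 = q • (qMinkGen q 2 * qMinkGen q 0) at hrel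
      simp only [map_mul, qPhi_smul, qPhi_ι, qGenOp, hswap02, hswap32, hc,
        ← MulOpposite.op_mul, ← MulOpposite.op_smul, MulOpposite.op_inj]
      rw [hrel, smul_smul, inv_mul_cancel₀ hq, one_smul]
  | mvb =>
      have hrel := RingQuot.mkAlgHom_rel ℂ (qMinkRel.mv (q := q))
      simp only [map_smul, map_mul] at hrel
      change qMinkGen q 1 * qMinkGen q 2 = q⁻¹ • (qMinkGen q 2 * qMinkGen q 1) at hrel
      simp only [map_mul, qPhi_smul, qPhi_ι, qGenOp, hswap12, hswap32, map_inv₀, hc,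
        inv_inv, ← MulOpposite.op_mul, ← MulOpposite.op_smul, MulOpposite.op_inj]
      rw [hrel, smul_smul, mul_inv_cancel₀ hq, one_smul]
  | comm =>
      have hrel := RingQuot.mkAlgHom_rel ℂ (qMinkRel.comm (q := q))
      simp only [map_smul, map_mul, map_sub] at hrel
      change qMinkGen q 0 * qMinkGen q 1 - qMinkGen q 1 * qMinkGen q 0 = (q - q⁻¹) • (qMinkGen q 2 * qMinkGen q 3) at hrel
      have hdiff : (starRingEnd ℂ) (q - q⁻¹) = -(q - q⁻¹) := by
        rw [map_sub, hc, map_inv₀, hc, inv_inv]; ring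
      simp only [map_mul, map_sub, qPhi_smul, qPhi_ι, qGenOp, hswap02, hswap12,
        hswap22, hswap32, hdiff, ← MulOpposite.op_mul, ← MulOpposite.op_sub,
        ← MulOpposite.op_smul, MulOpposite.op_inj]
      rw [← neg_sub, hrel]; exact (neg_smul (M := RingQuot (qMinkRel q)) (q - q⁻¹) (qMinkGen q 2 * qMinkGen q 3)).symm
  | vvb =>
      have hrel := RingQuot.mkAlgHom_rel ℂ (qMinkRel.vvb (q := q))
      simp only [map_mul] at hrel
      change qMinkGen q 3 * qMinkGen q 2 = qMinkGen q 2 * qMinkGen q 3 at hrel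
      simp only [map_mul, qPhi_ι, qGenOp, hswap22, hswap32, ← MulOpposite.op_mul,
        MulOpposite.op_inj]
      rw [hrel]

/-- if `|q| = 1` then the assignment `ω(x₊) = x₊`, `ω(x₋) = x₋`,
`ω(v) = v̄`, `ω(v̄) = v` extends to a well-defined anti-linear anti-involution of the
q-Minkowski algebra. -/
theorem qMinkowski_antilinear_antiinvolution (q : ℂ) (hq : q ≠ 0)
    (habs : ‖q‖ = 1) :
    ∃ ω : qMinkAlg q → qMinkAlg q,
      (∀ a b : qMinkAlg q, ω (a + b) = ω a + ω b) ∧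
      (∀ a b : qMinkAlg q, ω (a * b) = ω b * ω a) ∧
      (∀ (c : ℂ) (a : qMinkAlg q), ω (c • a) = (starRingEnd ℂ c) • ω a) ∧
      ω 1 = 1 ∧
      (∀ a : qMinkAlg q, ω (ω a) = a) ∧
      ω (qMinkGen q 0) = qMinkGen q 0 ∧
      ω (qMinkGen q 1) = qMinkGen q 1 ∧
      ω (qMinkGen q 2) = qMinkGen q 3 ∧
      ω (qMinkGen q 3) = qMinkGen q 2 := by
  classical
  set F : qMinkAlg q →+* (qMinkAlg q)ᵐᵒᵖ :=
    RingQuot.lift ⟨qPhi q, fun _ _ h => qPhi_rel q hq habs h⟩ with hF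
  set ω : qMinkAlg q → qMinkAlg q := fun a => (F a).unop with hω
  have hcoe : ∀ x : FreeAlgebra ℂ (Fin 4),
      RingQuot.mkAlgHom ℂ (qMinkRel q) x = RingQuot.mkRingHom (qMinkRel q) x := by
    intro x
    exact DFunLike.congr_fun (RingQuot.mkAlgHom_coe ℂ (qMinkRel q)) x
  have hmk : ∀ x : FreeAlgebra ℂ (Fin 4),
      ω (RingQuot.mkAlgHom ℂ (qMinkRel q) x) = (qPhi q x).unop := by
    intro x
    rw [hω, hF, hcoe x]
    exact congrArg MulOpposite.unop
      (RingQuot.lift_mkRingHom_apply (qPhi q) (fun _ _ h => qPhi_rel q hq habs h) x)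
  have hadd : ∀ a b : qMinkAlg q, ω (a + b) = ω a + ω b := by
    intro a b; simp [hω, map_add]
  have hmul : ∀ a b : qMinkAlg q, ω (a * b) = ω b * ω a := by
    intro a b; simp [hω, map_mul]
  have halg : ∀ c : ℂ,
      ω (algebraMap ℂ (qMinkAlg q) c) = algebraMap ℂ (qMinkAlg q) ((starRingEnd ℂ) c) := by
    intro c
    have h1 : algebraMap ℂ (qMinkAlg q) c
        = RingQuot.mkAlgHom ℂ (qMinkRel q) (algebraMap ℂ _ c) :=
      ((RingQuot.mkAlgHom ℂ (qMinkRel q)).commutes c).symm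
    rw [h1, hmk, qPhi_algebraMap]
    rfl
  have hsmul : ∀ (c : ℂ) (a : qMinkAlg q), ω (c • a) = (starRingEnd ℂ c) • ω a := by
    intro c a
    rw [Algebra.smul_def, hmul, halg, ← Algebra.commutes, ← Algebra.smul_def]
  have hone : ω 1 = 1 := by simp [hω, map_one]
  have hgen : ∀ i : Fin 4, ω (qMinkGen q i) = qMinkGen q (Equiv.swap (2 : Fin 4) 3 i) := by
    intro i
    rw [qMinkGen, hmk, qPhi_ι]
    rfl
  have hinv : ∀ a : qMinkAlg q, ω (ω a) = a := by
    have hsurj := RingQuot.mkAlgHom_surjective ℂ (qMinkRel q)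
    intro a
    obtain ⟨x, rfl⟩ := hsurj a
    induction x using FreeAlgebra.induction with
    | grade0 c =>
        rw [(RingQuot.mkAlgHom ℂ (qMinkRel q)).commutes c]
        show ω (ω (algebraMap ℂ (qMinkAlg q) c)) = algebraMap ℂ (qMinkAlg q) c
        rw [halg, halg, Complex.conj_conj]
    | grade1 i =>
        have h1 : RingQuot.mkAlgHom ℂ (qMinkRel q) (ι ℂ i) = qMinkGen q i := rfl
        rw [h1, hgen, hgen, Equiv.swap_apply_self]
    | mul a b ha hb =>
        rw [map_mul]; exact (congrArg ω (hmul _ _)).trans ((hmul _ _).trans (by rw [ha, hb]; rfl))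
    | add a b ha hb =>
        rw [map_add]; exact (congrArg ω (hadd _ _)).trans ((hadd _ _).trans (by rw [ha, hb]; rfl))
  refine ⟨ω, hadd, hmul, hsmul, hone, hinv, ?_, ?_, ?_, ?_⟩
  · rw [hgen, show Equiv.swap (2 : Fin 4) 3 0 = 0 by decide]
  · rw [hgen, show Equiv.swap (2 : Fin 4) 3 1 = 1 by decide]
  · rw [hgen, show Equiv.swap (2 : Fin 4) 3 2 = 3 by decide]
  · rw [hgen, show Equiv.swap (2 : Fin 4) 3 3 = 2 by decide]
end

section
/- With Ĵ_+ = −K k_-, Ĵ_- = −q^{-s-2} K k_+, Ĵ_v = K k_{v̄}, Ĵ_{v̄} = q^{-s-2} K k_v, the four splittings hold: q Ĵ_+ k_+ + Ĵ_v k_v = 0, q Ĵ_{v̄} k_{v̄} + Ĵ_- k_- = 0, Ĵ_+ k_+ + q^{s+1} Ĵ_{v̄} k_{v̄} = 0, and Ĵ_v k_v + q^{s+1} Ĵ_- k_- = 0, where the second pair requires the q-cone condition k_- k_+ = q^{-1} k_v k_{v̄}. -/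
/-- with `Ĵ₊ = −K k₋`, `Ĵ₋ = −q^{−s−2} K k₊`, `Ĵ_v = K k_v̄`,
`Ĵ_v̄ = q^{−s−2} K k_v`, the four splittings of current conservation hold:
`q Ĵ₊ k₊ + Ĵ_v k_v = 0`, `q Ĵ_v̄ k_v̄ + Ĵ₋ k₋ = 0`,
`Ĵ₊ k₊ + q^{s+1} Ĵ_v̄ k_v̄ = 0`, `Ĵ_v k_v + q^{s+1} Ĵ₋ k₋ = 0`,
where the second pair requires the q-cone condition `k₋k₊ = q⁻¹ k_v k_v̄`. -/
theorem qCurrent_conservation_splittings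
    {A : Type*} [Ring A] [Algebra ℂ A] (q : ℂ) (hq : q ≠ 0)
    (kp km kv kvb : A)
    (h1 : kp * kv = q • (kv * kp))
    (h2 : km * kv = q⁻¹ • (kv * km))
    (h3 : kp * kvb = q • (kvb * kp))
    (h4 : km * kvb = q⁻¹ • (kvb * km))
    (h5 : kp * km - km * kp = (q - q⁻¹) • (kv * kvb))
    (h6 : kvb * kv = kv * kvb)
    (s m : ℕ) (γv γm γp γvb : ℂ)
    (K Jp Jm Jv Jvb : A)
    (hK : K = γv • kv ^ (m + 1) + γm • km ^ (m + 1) + γp • kp ^ (m + 1) +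
      γvb • kvb ^ (m + 1))
    (hJp : Jp = -(K * km))
    (hJm : Jm = -((q⁻¹ ^ (s + 2)) • (K * kp)))
    (hJv : Jv = K * kvb)
    (hJvb : Jvb = (q⁻¹ ^ (s + 2)) • (K * kv))
    (hcone : km * kp = q⁻¹ • (kv * kvb)) :
    q • (Jp * kp) + Jv * kv = 0 ∧
    q • (Jvb * kvb) + Jm * km = 0 ∧
    Jp * kp + (q ^ (s + 1)) • (Jvb * kvb) = 0 ∧
    Jv * kv + (q ^ (s + 1)) • (Jm * km) = 0 := by
  have hpm : kp * km = q • (kv * kvb) := by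
    have := h5
    rw [hcone] at this
    have h := sub_eq_iff_eq_add.mp this
    rw [h, ← add_smul]; ring_nf
  refine ⟨?_, ?_, ?_, ?_⟩ <;>
    simp only [hJp, hJv, hJm, hJvb, neg_mul, smul_mul_assoc, mul_assoc, h6, hcone,
      hpm, mul_smul_comm, smul_smul, smul_neg, inv_pow] <;>
    match_scalars <;>
    field_simp <;>
    ring
end

section
/- With J̃_+ = −q^{s+1} K k_-, J̃_- = −q^{-1} K k_+, J̃_v = K k_{v̄}, J̃_{v̄} = q^s K k_v, on the q-cone k_- k_+ = q^{-1} k_v k_{v̄} one has J̃_+ k_+ + q^s J̃_v k_v + J̃_{v̄} k_{v̄} + q^s J̃_- k_- = 0. -/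
/-- with `J̃₊ = −q^{s+1} K k₋`, `J̃₋ = −q⁻¹ K k₊`, `J̃_v = K k_v̄`,
`J̃_v̄ = q^s K k_v`, on the q-cone `k₋k₊ = q⁻¹ k_v k_v̄` one has
`J̃₊ k₊ + q^s J̃_v k_v + J̃_v̄ k_v̄ + q^s J̃₋ k₋ = 0`. -/
theorem qCurrent_conservation_conjugate_basis
    {A : Type*} [Ring A] [Algebra ℂ A] (q : ℂ) (hq : q ≠ 0)
    (kp km kv kvb : A)
    (h1 : kp * kv = q • (kv * kp))
    (h2 : km * kv = q⁻¹ • (kv * km))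
    (h3 : kp * kvb = q • (kvb * kp))
    (h4 : km * kvb = q⁻¹ • (kvb * km))
    (h5 : kp * km - km * kp = (q - q⁻¹) • (kv * kvb))
    (h6 : kvb * kv = kv * kvb)
    (s m : ℕ) (γv γm γp γvb : ℂ)
    (K Jp Jm Jv Jvb : A)
    (hK : K = γv • kv ^ (m + 1) + γm • km ^ (m + 1) + γp • kp ^ (m + 1) +
      γvb • kvb ^ (m + 1))
    (hJp : Jp = -((q ^ (s + 1)) • (K * km)))
    (hJm : Jm = -(q⁻¹ • (K * kp)))
    (hJv : Jv = K * kvb)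
    (hJvb : Jvb = (q ^ s) • (K * kv))
    (hcone : km * kp = q⁻¹ • (kv * kvb)) :
    Jp * kp + (q ^ s) • (Jv * kv) + Jvb * kvb + (q ^ s) • (Jm * km) = 0 := by
  have hpm : kp * km = q • (kv * kvb) := by
    have := h5
    rw [hcone] at this
    have h := sub_eq_iff_eq_add.mp this
    rw [h, ← add_smul]
    ring_nf
  subst hJp hJm hJv hJvb
  rw [neg_mul, smul_mul_assoc, mul_assoc, hcone, mul_assoc, h6, smul_mul_assoc,
    mul_assoc, neg_mul, smul_mul_assoc, mul_assoc, hpm]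
  simp only [mul_smul_comm, smul_smul, smul_neg]
  match_scalars <;> field_simp <;> ring
end
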